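/- arXiv:1510.03522 — 3 statements merged into one kernel-verified Lean document; each statement's English description precedes it below -/
import Mathlib

section
/- Let K ≥ 1 and let h : [0,T] → ℝ be a nonnegative differentiable function satisfying h'(t) ≤ -h(t)² + K² for all t ∈ [0,T], with arbitrary initial value h(0) ≥ 0. Then for all t ∈ [T/2, T], h(t) ≤ K·(1 + 2/(e^T - 1)). -/
/-!
Above the level `K` the inequality `h' ≤ K² - h²` forces `h` to decrease, so every level `B > K`
is a barrier that `h` cannot cross upwards. While `h > K`, the reciprocal `w = 1 / (h - K)`
satisfies the linear inequality `w' ≥ 2 K w + 1`, and Grönwall gives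
`w(t) ≥ (e^{2 K t} - 1) / (2 K)` whatever `w(0) ≥ 0` is. Hence `h(t) ≤ K coth (K t)`, the
solution of `y' = K² - y²` issued from `+∞`, and `K ≥ 1`, `t ≥ T / 2` give the bound.
-/

open Real Set

theorem riccati_le_of_le_left {f f' : ℝ → ℝ} {a b K B : ℝ} (hK : 0 ≤ K) (hKB : K < B)
    (hf : ∀ x ∈ Icc a b, HasDerivAt f (f' x) x)
    (hineq : ∀ x ∈ Icc a b, f' x ≤ -f x ^ 2 + K ^ 2) (ha : f a ≤ B) :
    ∀ x ∈ Icc a b, f x ≤ B :=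
  image_le_of_deriv_right_lt_deriv_boundary (B' := fun _ => 0)
    (fun x hx => (hf x hx).continuousAt.continuousWithinAt)
    (fun x hx => (hf x (Ico_subset_Icc_self hx)).hasDerivWithinAt) ha
    (fun _ => hasDerivAt_const _ B)
    (fun x hx hfx => by nlinarith [hineq x (Ico_subset_Icc_self hx)])

/-- `K * (1 + 2 / (exp (2 * K * (b - a)) - 1))` is `K * coth (K * (b - a))`. -/
theorem riccati_le_coth_of_forall_gt {f f' : ℝ → ℝ} {a b K : ℝ} (hK : 0 < K) (hab : a < b)
    (hf : ∀ x ∈ Icc a b, HasDerivAt f (f' x) x)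
    (hineq : ∀ x ∈ Icc a b, f' x ≤ -f x ^ 2 + K ^ 2) (hgt : ∀ x ∈ Icc a b, K < f x) :
    f b ≤ K * (1 + 2 / (exp (2 * K * (b - a)) - 1)) := by
  have hw : ∀ x ∈ Icc a b,
      HasDerivAt (fun y => -(f y - K)⁻¹) (f' x / (f x - K) ^ 2) x := fun x hx =>
    (((hf x hx).sub_const K).inv (sub_pos.2 (hgt x hx)).ne').neg.congr_deriv (by ring)
  have hlin : ∀ x ∈ Ico a b, f' x / (f x - K) ^ 2 ≤ 2 * K * -(f x - K)⁻¹ + -1 := by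
    intro x hx
    have hpos := sub_pos.2 (hgt x (Ico_subset_Icc_self hx))
    rw [div_le_iff₀ (by positivity)]
    field_simp
    nlinarith [hineq x (Ico_subset_Icc_self hx)]
  have hgron := le_gronwallBound_of_liminf_deriv_right_le
    (fun x hx => (hw x hx).continuousAt.continuousWithinAt)
    (fun x hx _ hr => (hw x (Ico_subset_Icc_self hx)).hasDerivWithinAt.liminf_right_slope_le hr)
    (neg_nonpos.2 (inv_nonneg.2 (sub_pos.2 (hgt a (left_mem_Icc.2 hab.le))).le)) hlin
    b (right_mem_Icc.2 hab.le)
  have hE : 0 < exp (2 * K * (b - a)) - 1 := by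
    rw [sub_pos, one_lt_exp_iff]; nlinarith
  have hpos := sub_pos.2 (hgt b (right_mem_Icc.2 hab.le))
  have hw_b : (exp (2 * K * (b - a)) - 1) / (2 * K) ≤ (f b - K)⁻¹ := by
    simpa only [gronwallBound_of_K_ne_0 (by positivity : 2 * K ≠ 0), zero_mul, zero_add,
      neg_div, neg_mul, neg_le_neg_iff, div_mul_eq_mul_div, one_mul] using hgron
  rw [le_inv_comm₀ (by positivity) hpos, inv_div] at hw_b
  calc f b ≤ K + 2 * K / (exp (2 * K * (b - a)) - 1) := by linarith
    _ = K * (1 + 2 / (exp (2 * K * (b - a)) - 1)) := by ring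

theorem riccati_le_coth {f f' : ℝ → ℝ} {a b K : ℝ} (hK : 0 < K) (hab : a < b)
    (hf : ∀ x ∈ Icc a b, HasDerivAt f (f' x) x)
    (hineq : ∀ x ∈ Icc a b, f' x ≤ -f x ^ 2 + K ^ 2) :
    f b ≤ K * (1 + 2 / (exp (2 * K * (b - a)) - 1)) := by
  by_cases hgt : ∀ x ∈ Icc a b, K < f x
  · exact riccati_le_coth_of_forall_gt hK hab hf hineq hgt
  push Not at hgt
  obtain ⟨x, hx, hfx⟩ := hgt
  have hE : 0 < exp (2 * K * (b - a)) - 1 := by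
    rw [sub_pos, one_lt_exp_iff]; nlinarith
  have hK_lt : K < K * (1 + 2 / (exp (2 * K * (b - a)) - 1)) :=
    lt_mul_right hK (lt_add_of_pos_right 1 (by positivity))
  have hsub : Icc x b ⊆ Icc a b := Icc_subset_Icc_left hx.1
  exact riccati_le_of_le_left hK.le hK_lt (fun y hy => hf y (hsub hy))
    (fun y hy => hineq y (hsub hy)) (hfx.trans hK_lt.le) b (right_mem_Icc.2 hx.2)

theorem stmt_0_general (T K : ℝ) (hT : 0 < T) (hK : 1 ≤ K)
    (h h' : ℝ → ℝ)
    (hderiv : ∀ t ∈ Icc 0 T, HasDerivAt h (h' t) t)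
    (hineq : ∀ t ∈ Icc 0 T, h' t ≤ -(h t) ^ 2 + K ^ 2) :
    ∀ t ∈ Icc (T / 2) T, h t ≤ K * (1 + 2 / (Real.exp T - 1)) := by
  intro t ht
  have ht0 : 0 < t := by linarith [ht.1]
  have hsub : Icc 0 t ⊆ Icc 0 T := Icc_subset_Icc_right ht.2
  have hET : 0 < exp T - 1 := by rw [sub_pos, one_lt_exp_iff]; exact hT
  calc h t ≤ K * (1 + 2 / (exp (2 * K * (t - 0)) - 1)) :=
        riccati_le_coth (zero_lt_one.trans_le hK) ht0 (fun x hx => hderiv x (hsub hx))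
          (fun x hx => hineq x (hsub hx))
    _ ≤ K * (1 + 2 / (exp T - 1)) := by
        gcongr
        nlinarith [ht.1]

/-- Riccati-type differential inequality: uniform-in-initial-data bound after time T/2. -/
theorem stmt_0 (T K : ℝ) (hT : 0 < T) (hK : 1 ≤ K)
    (h h' : ℝ → ℝ)
    (hderiv : ∀ t ∈ Icc 0 T, HasDerivAt h (h' t) t)
    (hnonneg : ∀ t ∈ Icc 0 T, 0 ≤ h t)
    (hineq : ∀ t ∈ Icc 0 T, h' t ≤ -(h t) ^ 2 + K ^ 2) :
    ∀ t ∈ Icc (T / 2) T, h t ≤ K * (1 + 2 / (Real.exp T - 1)) :=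
  stmt_0_general T K hT hK h h' hderiv hineq
end

section
/- Let K ≥ 1 and let g solve g'(t) = -g(t)² + K² on [0,T] with g(0) > K. Then for all t ∈ [T/2, T], g(t) ≤ K·(1 + 2·(e^T - 1)^{-1}). -/
/-!
Since `g - K` satisfies the linear equation `(g - K)' = -(g + K) (g - K)`, it cannot reach `0`,
so `g > K` throughout. The reciprocal `u = (g - K)⁻¹` then solves `u' = 2 K u + 1`, whence
`u t = (u 0 + 1/(2K)) e^{2Kt} - 1/(2K) > (e^{2Kt} - 1)/(2K) ≥ (e^T - 1)/(2K)` for `2Kt ≥ T`.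
-/

open Real Set

theorem pos_of_hasDerivAt_eq_mul_self {f c : ℝ → ℝ} {a b : ℝ} (hc : ContinuousOn c (Icc a b))
    (hf : ∀ t ∈ Icc a b, HasDerivAt f (c t * f t) t) (ha : 0 < f a) :
    ∀ t ∈ Icc a b, 0 < f t := by
  intro t ht
  by_contra! hle
  have hfc : ContinuousOn f (Icc a b) := fun x hx => (hf x hx).continuousAt.continuousWithinAt
  obtain ⟨t₀, ht₀, hzero⟩ : ∃ t₀ ∈ Icc a t, f t₀ = 0 :=
    intermediate_value_Icc' ht.1 (hfc.mono (Icc_subset_Icc_right ht.2)) ⟨hle, ha.le⟩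
  obtain ⟨C, hC⟩ := isCompact_Icc.exists_bound_of_continuousOn hc
  have hmaps : ∀ s ∈ Icc 0 (t₀ - a), t₀ - s ∈ Icc a b := fun s hs =>
    ⟨by linarith [hs.2], by linarith [hs.1, ht₀.2, ht.2]⟩
  -- Backward in time from `t₀`, `f` solves a linear equation with zero data, so it vanishes.
  have hback := eq_zero_of_abs_deriv_le_mul_abs_self_of_eq_zero_right (K := C)
    (f := fun s => f (t₀ - s)) (f' := fun s => -(c (t₀ - s) * f (t₀ - s)))
    (fun s hs => (hf _ (hmaps s hs)).continuousAt.comp_continuousWithinAt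
      (continuousWithinAt_const.sub continuousWithinAt_id))
    (fun s hs => by
      simpa using ((hf _ (hmaps s (Ico_subset_Icc_self hs))).comp s
        ((hasDerivAt_id s).const_sub t₀)).hasDerivWithinAt (f := fun s => f (t₀ - s)))
    (by simpa using hzero)
    (fun s hs => by
      rw [norm_neg, norm_mul]
      exact mul_le_mul_of_nonneg_right (hC _ (hmaps s (Ico_subset_Icc_self hs))) (norm_nonneg _))
    (t₀ - a) ⟨sub_nonneg.2 ht₀.1, le_rfl⟩
  simp only [sub_sub_cancel] at hback
  exact ha.ne' hback

theorem eq_of_hasDerivAt_eq_mul_add {u : ℝ → ℝ} {c d a b : ℝ} (hc : c ≠ 0)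
    (hu : ∀ t ∈ Icc a b, HasDerivAt u (c * u t + d) t) :
    ∀ t ∈ Icc a b, u t = (u a + d / c) * exp (c * (t - a)) - d / c := by
  set w : ℝ → ℝ := fun t => (u t + d / c) * exp (-(c * (t - a)))
  have hw : ∀ t ∈ Icc a b, HasDerivAt w 0 t := fun t ht => by
    have hexp : HasDerivAt (fun s => exp (-(c * (s - a)))) (exp (-(c * (t - a))) * -(c * 1)) t :=
      ((((hasDerivAt_id t).sub_const a).const_mul c).neg).exp
    exact (((hu t ht).add_const (d / c)).fun_mul hexp).congr_deriv (by field_simp; ring)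
  intro t ht
  have hconst := constant_of_has_deriv_right_zero
    (fun s hs => (hw s hs).continuousAt.continuousWithinAt)
    (fun s hs => (hw s (Ico_subset_Icc_self hs)).hasDerivWithinAt) t ht
  simp only [w, sub_self, mul_zero, neg_zero, exp_zero, mul_one] at hconst
  rw [← hconst, mul_assoc, ← exp_add]
  simp

theorem hasDerivAt_inv_sub_of_riccati {g : ℝ → ℝ} {K t : ℝ}
    (hg : HasDerivAt g (-(g t) ^ 2 + K ^ 2) t) (ht : g t ≠ K) :
    HasDerivAt (fun s => (g s - K)⁻¹) (2 * K * (g t - K)⁻¹ + 1) t := by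
  have hne : g t - K ≠ 0 := sub_ne_zero.2 ht
  exact ((hg.sub_const K).inv hne).congr_deriv (by field_simp; ring)

theorem lt_of_hasDerivAt_riccati {g : ℝ → ℝ} {K a b : ℝ}
    (hg : ∀ t ∈ Icc a b, HasDerivAt g (-(g t) ^ 2 + K ^ 2) t) (ha : K < g a) :
    ∀ t ∈ Icc a b, K < g t := by
  have hpos := pos_of_hasDerivAt_eq_mul_self (f := fun t => g t - K) (c := fun t => -(g t + K))
    (fun t ht => ((hg t ht).continuousAt.continuousWithinAt.add continuousWithinAt_const).neg)
    (fun t ht => ((hg t ht).sub_const K).congr_deriv (by ring)) (sub_pos.2 ha)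
  exact fun t ht => sub_pos.1 (hpos t ht)

/-- Bound for solutions of the Riccati equation started above the equilibrium K. -/
theorem stmt_2 (T K : ℝ) (hT : 0 < T) (hK : 1 ≤ K) (g : ℝ → ℝ)
    (hderiv : ∀ t ∈ Icc 0 T, HasDerivAt g (-(g t) ^ 2 + K ^ 2) t)
    (hg0 : K < g 0) :
    ∀ t ∈ Icc (T / 2) T, g t ≤ K * (1 + 2 * (Real.exp T - 1)⁻¹) := by
  have hgt := lt_of_hasDerivAt_riccati hderiv hg0
  have hsol := eq_of_hasDerivAt_eq_mul_add (u := fun t => (g t - K)⁻¹) (c := 2 * K) (d := 1)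
    (by positivity) fun t ht =>
      hasDerivAt_inv_sub_of_riccati (hderiv t ht) (hgt t ht).ne'
  intro t ht
  have hK0 : 0 < K := by linarith
  have heT : 0 < exp T - 1 := by linarith [add_one_lt_exp hT.ne']
  have hinv : (exp T - 1) / (2 * K) ≤ (g t - K)⁻¹ := by
    rw [hsol t ⟨by linarith [ht.1], ht.2⟩, sub_zero]
    calc (exp T - 1) / (2 * K) ≤ (exp (2 * K * t) - 1) / (2 * K) := by
          gcongr; nlinarith [ht.1]
      _ = (0 + 1 / (2 * K)) * exp (2 * K * t) - 1 / (2 * K) := by ring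
      _ ≤ ((g 0 - K)⁻¹ + 1 / (2 * K)) * exp (2 * K * t) - 1 / (2 * K) := by
          gcongr; exact (inv_pos.2 (sub_pos.2 hg0)).le
  have hsub : g t - K ≤ K * (2 * (exp T - 1)⁻¹) := by
    calc g t - K = ((g t - K)⁻¹)⁻¹ := (inv_inv _).symm
      _ ≤ ((exp T - 1) / (2 * K))⁻¹ := inv_anti₀ (by positivity) hinv
      _ = K * (2 * (exp T - 1)⁻¹) := by rw [inv_div]; ring
  linarith
end

section
/- Let x ∈ H with Fourier expansion x = Σ_{k∈ℤ∖{0}} x_k e_k where e_k(ξ) = e^{2πikξ}, and suppose Σ_k γ_k |x_k|² < ∞ where γ_k = 4π²k². Then ‖x‖_{L⁴(𝕋)}⁴ ≤ ‖x‖_V² · ‖x‖_H², where ‖x‖_V² = Σ_k γ_k|x_k|² and ‖x‖_H² = Σ_k |x_k|². -/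
/-! Cauchy–Schwarz against the weights `γ_k⁻¹`, whose sum is `2 ζ(2) / (4π²) = 1/12`, shows that
the Fourier coefficients of `x` are absolutely summable with `(∑ |c_k|)² ≤ ‖x‖_V² / 12`. The
Fourier series then converges uniformly to a continuous representative of `x`, so
`‖x‖_∞ ≤ ∑ |c_k|`, and `∫ x⁴ ≤ ‖x‖_∞² ∫ x² ≤ ‖x‖_V² ‖x‖_H²` by Parseval. -/

open MeasureTheory Real AddCircle

theorem Real.summable_and_tsum_sqrt_mul_sqrt_le {ι : Type*} {f g : ι → ℝ}
    (hf : ∀ i, 0 ≤ f i) (hg : ∀ i, 0 ≤ g i) (hf_sum : Summable f) (hg_sum : Summable g) :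
    (Summable fun i => √(f i) * √(g i)) ∧
      ∑' i, √(f i) * √(g i) ≤ √(∑' i, f i) * √(∑' i, g i) := by
  have hsq {h : ι → ℝ} (hh : ∀ i, 0 ≤ h i) : (fun i => √(h i) ^ (2 : ℝ)) = h := by
    funext i; rw [rpow_two, sq_sqrt (hh i)]
  have := summable_and_inner_le_Lp_mul_Lq_tsum_of_nonneg HolderConjugate.two_two
    (fun i => sqrt_nonneg (f i)) (fun i => sqrt_nonneg (g i))
    ((hsq hf).symm ▸ hf_sum) ((hsq hg).symm ▸ hg_sum)
  rwa [hsq hf, hsq hg, ← sqrt_eq_rpow, ← sqrt_eq_rpow] at this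

theorem hasSum_inv_four_pi_sq_mul_int_sq :
    HasSum (fun k : ℤ => (4 * π ^ 2 * (k : ℝ) ^ 2)⁻¹) (1 / 12) := by
  set f : ℤ → ℝ := fun k => (4 * π ^ 2 * (k : ℝ) ^ 2)⁻¹
  -- the `k = 0` term is `0⁻¹ = 0`
  have hnat : HasSum (fun n : ℕ => f n) (1 / 24) := by
    have h := hasSum_zeta_two.mul_left (4 * π ^ 2)⁻¹
    rw [show (4 * π ^ 2)⁻¹ * (π ^ 2 / 6) = 1 / 24 by field_simp; norm_num] at h
    simpa only [f, Int.cast_natCast, one_div, mul_inv] using h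
  have hneg : HasSum (fun n : ℕ => f (-n)) (1 / 24) := by
    simpa only [f, Int.cast_neg, neg_sq] using hnat
  have h := hnat.of_nat_of_neg hneg
  rwa [show f 0 = 0 by simp [f], sub_zero, show (1 : ℝ) / 24 + 1 / 24 = 1 / 12 by norm_num] at h

namespace AddCircle

variable {T : ℝ} [Fact (0 < T)]

theorem tsum_sq_norm_fourierCoeff_of_memLp {f : AddCircle T → ℂ} (hf : MemLp f 2 haarAddCircle) :
    ∑' n : ℤ, ‖fourierCoeff f n‖ ^ 2 = ∫ t, ‖f t‖ ^ 2 ∂haarAddCircle := by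
  rw [← fourierCoeff_congr_ae hf.coeFn_toLp, tsum_sq_fourierCoeff]
  exact integral_congr_ae (hf.coeFn_toLp.mono fun t ht => by simp only [ht])

theorem norm_smul_fourier (a : ℂ) (n : ℤ) : ‖a • (fourier n : C(AddCircle T, ℂ))‖ = ‖a‖ := by
  rw [norm_smul, fourier_norm, mul_one]

theorem summable_fourierCoeff_smul_fourier {c : ℤ → ℂ} (hc : Summable fun n => ‖c n‖) :
    Summable fun n => c n • (fourier n : C(AddCircle T, ℂ)) :=
  .of_norm <| by simpa only [norm_smul_fourier] using hc

theorem ae_eq_tsum_fourierCoeff_smul_fourier {f : AddCircle T → ℂ} (hf : MemLp f 2 haarAddCircle)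
    (hc : Summable fun n => ‖fourierCoeff f n‖) :
    f =ᵐ[haarAddCircle] ⇑(∑' n : ℤ, fourierCoeff f n • (fourier n : C(AddCircle T, ℂ))) := by
  set g : C(AddCircle T, ℂ) := ∑' n : ℤ, fourierCoeff f n • fourier n
  have hg : HasSum (fun n => fourierCoeff f n • fourierLp 2 n) (g.toLp 2 haarAddCircle ℂ) := by
    simpa only [map_smul] using
      (ContinuousMap.toLp 2 haarAddCircle ℂ).hasSum (summable_fourierCoeff_smul_fourier hc).hasSum
  have hf' : HasSum (fun n => fourierCoeff f n • fourierLp 2 n) (hf.toLp f) := by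
    simpa only [fourierCoeff_congr_ae hf.coeFn_toLp] using hasSum_fourier_series_L2 (hf.toLp f)
  exact hf.coeFn_toLp.symm.trans (hf'.unique hg ▸ ContinuousMap.coeFn_toLp haarAddCircle g)

theorem ae_norm_le_tsum_norm_fourierCoeff {f : AddCircle T → ℂ} (hf : MemLp f 2 haarAddCircle)
    (hc : Summable fun n => ‖fourierCoeff f n‖) :
    ∀ᵐ t ∂haarAddCircle, ‖f t‖ ≤ ∑' n : ℤ, ‖fourierCoeff f n‖ := by
  filter_upwards [ae_eq_tsum_fourierCoeff_smul_fourier hf hc] with t ht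
  rw [ht]
  refine (ContinuousMap.norm_coe_le_norm _ t).trans ?_
  refine (norm_tsum_le_tsum_norm ?_).trans_eq ?_
  · simpa only [norm_smul_fourier] using hc
  · simp only [norm_smul_fourier]

end AddCircle

theorem integral_pow_four_le_of_ae_abs_le {α : Type*} [MeasurableSpace α] {μ : Measure α}
    {f : α → ℝ} {M : ℝ} (hf : MemLp f 2 μ) (hM : ∀ᵐ a ∂μ, |f a| ≤ M) :
    ∫ a, f a ^ 4 ∂μ ≤ M ^ 2 * ∫ a, f a ^ 2 ∂μ := by
  rw [← integral_const_mul]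
  refine integral_mono_of_nonneg (.of_forall fun a => by positivity)
    (hf.integrable_sq.const_mul _) ?_
  filter_upwards [hM] with a ha
  have : f a ^ 2 ≤ M ^ 2 := sq_le_sq' (abs_le.mp ha).1 (abs_le.mp ha).2
  nlinarith [sq_nonneg (f a)]

theorem summable_norm_and_sq_tsum_norm_le_tsum_four_pi_sq_mul_sq {c : ℤ → ℂ} (h0 : c 0 = 0)
    (hV : Summable fun k : ℤ => 4 * π ^ 2 * (k : ℝ) ^ 2 * ‖c k‖ ^ 2) :
    (Summable fun k => ‖c k‖) ∧
      (∑' k, ‖c k‖) ^ 2 ≤ 1 / 12 * ∑' k : ℤ, 4 * π ^ 2 * (k : ℝ) ^ 2 * ‖c k‖ ^ 2 := by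
  set γ : ℤ → ℝ := fun k => 4 * π ^ 2 * (k : ℝ) ^ 2
  have hγ : ∀ k, 0 ≤ γ k := fun k => by positivity
  have hsplit : ∀ k, ‖c k‖ = √((γ k)⁻¹) * √(γ k * ‖c k‖ ^ 2) := fun k => by
    rcases eq_or_ne k 0 with rfl | hk
    · simp [h0]
    · have : γ k ≠ 0 := by simp [γ, hk, pi_ne_zero]
      rw [← sqrt_mul (inv_nonneg.mpr (hγ k)), inv_mul_cancel_left₀ this, sqrt_sq (norm_nonneg _)]
  rw [show (fun k => ‖c k‖) = fun k => √((γ k)⁻¹) * √(γ k * ‖c k‖ ^ 2) from funext hsplit]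
  obtain ⟨hsum, hle⟩ := summable_and_tsum_sqrt_mul_sqrt_le (fun k => inv_nonneg.mpr (hγ k))
    (fun k => mul_nonneg (hγ k) (sq_nonneg _)) hasSum_inv_four_pi_sq_mul_int_sq.summable hV
  rw [hasSum_inv_four_pi_sq_mul_int_sq.tsum_eq] at hle
  refine ⟨hsum, (pow_le_pow_left₀ (tsum_nonneg fun k => by positivity) hle 2).trans_eq ?_⟩
  rw [mul_pow, sq_sqrt (by norm_num), sq_sqrt (tsum_nonneg fun k => by positivity)]

theorem stmt_6_general (x : AddCircle (1 : ℝ) → ℝ)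
    (hx4 : MemLp x 4 (volume : Measure (AddCircle (1 : ℝ))))
    (c : ℤ → ℂ) (hc : c = fourierCoeff (fun ξ => (x ξ : ℂ)))
    (hmean : c 0 = 0)
    (γ : ℤ → ℝ) (hγ : ∀ k : ℤ, γ k = 4 * π ^ 2 * (k : ℝ) ^ 2)
    (hV : Summable fun k : ℤ => γ k * ‖c k‖ ^ 2) :
    (∫ ξ, (x ξ) ^ 4) ≤ (∑' k : ℤ, γ k * ‖c k‖ ^ 2) * ∑' k : ℤ, ‖c k‖ ^ 2 := by
  simp only [hγ] at hV ⊢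
  have hvol : (volume : Measure (AddCircle (1 : ℝ))) = haarAddCircle := by
    rw [volume_eq_smul_haarAddCircle, ENNReal.ofReal_one, one_smul]
  rw [hvol] at hx4 ⊢
  have hx2 : MemLp x 2 haarAddCircle := hx4.mono_exponent (by norm_num)
  have hf : MemLp (fun ξ => (x ξ : ℂ)) 2 haarAddCircle := hx2.ofReal
  obtain ⟨hsum, hl1⟩ := summable_norm_and_sq_tsum_norm_le_tsum_four_pi_sq_mul_sq hmean hV
  have hsup : ∀ᵐ ξ ∂haarAddCircle, |x ξ| ≤ ∑' k, ‖c k‖ := by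
    subst hc
    simpa only [Complex.norm_real, norm_eq_abs] using
      ae_norm_le_tsum_norm_fourierCoeff hf hsum
  have hparseval : ∫ ξ, x ξ ^ 2 ∂haarAddCircle = ∑' k, ‖c k‖ ^ 2 := by
    subst hc
    simp only [tsum_sq_norm_fourierCoeff_of_memLp hf, Complex.norm_real,
      norm_eq_abs, sq_abs]
  calc ∫ ξ, x ξ ^ 4 ∂haarAddCircle
      ≤ (∑' k, ‖c k‖) ^ 2 * ∫ ξ, x ξ ^ 2 ∂haarAddCircle :=
        integral_pow_four_le_of_ae_abs_le hx2 hsup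
    _ ≤ _ := by
      rw [hparseval]
      gcongr
      exact hl1.trans (mul_le_of_le_one_left (tsum_nonneg fun k => by positivity) (by norm_num))

/-- Gagliardo–Nirenberg interpolation on the torus: ‖x‖_{L⁴}⁴ ≤ ‖x‖_V² ‖x‖_H²,
where the V- and H-norms are expressed via Fourier coefficients, γ_k = 4π²k². -/
theorem stmt_6 (x : AddCircle (1 : ℝ) → ℝ) (hx : Measurable x)
    (hx4 : MemLp x 4 (volume : Measure (AddCircle (1 : ℝ))))
    (c : ℤ → ℂ) (hc : c = fourierCoeff (fun ξ => (x ξ : ℂ)))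
    (hmean : c 0 = 0)
    (γ : ℤ → ℝ) (hγ : ∀ k : ℤ, γ k = 4 * π ^ 2 * (k : ℝ) ^ 2)
    (hV : Summable fun k : ℤ => γ k * ‖c k‖ ^ 2) :
    (∫ ξ, (x ξ) ^ 4) ≤ (∑' k : ℤ, γ k * ‖c k‖ ^ 2) * ∑' k : ℤ, ‖c k‖ ^ 2 :=
  stmt_6_general x hx4 c hc hmean γ hγ hV
end
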